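/- arXiv:2210.06705 — 2 statements merged into one kernel-verified Lean document; each statement's English description precedes it below -/
import Mathlib

section
/- Let E be a finite-dimensional real inner product space, F : E → ℝ differentiable with F ≥ 0, θ ∈ (0,1), and α > 0. Suppose F satisfies the Kurdyka–Łojasiewicz inequality α·F(u)^{1+θ} ≤ ‖∇F(u)‖² for every u ∈ E. Then every gradient-flow trajectory w : [0,∞) → E of F satisfies, for all t ≥ 0, F(w(t)) ≤ F(w(0)) / (1 + α θ F(w(0))^θ · t)^{1/θ}. -/
/-!
Along the flow, `g(s) = F(w(s))` satisfies `g' = -‖∇F(w)‖² ≤ -α g^(1+θ)`, so `g` is nonincreasing,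
and while `g > 0` the quantity `g^(-θ)` has derivative `-θ g^(-θ-1) g' ≥ αθ`. Hence
`g(t)^(-θ) ≥ g(0)^(-θ) + αθt`, which rearranges to the stated bound; if `g` reaches `0` the bound
is trivial.
-/

open RealInnerProductSpace Set

theorem HasGradientAt.comp_hasDerivAt {E : Type*} [NormedAddCommGroup E] [InnerProductSpace ℝ E]
    [CompleteSpace E] {F : E → ℝ} {g : E} {w : ℝ → E} {v : E} {t : ℝ}
    (hF : HasGradientAt F g (w t)) (hw : HasDerivAt w v t) :
    HasDerivAt (fun s => F (w s)) ⟪g, v⟫ t :=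
  (hF.hasFDerivAt.comp_hasDerivAt t hw).congr_deriv
    (InnerProductSpace.toDual_apply_apply ..)

section ODEComparison

variable {g g' : ℝ → ℝ} {α θ : ℝ}

theorem monotoneOn_rpow_neg_sub_mul {a b : ℝ} (hθ : 0 < θ)
    (hg : ∀ s ∈ Icc a b, HasDerivAt g (g' s) s) (hpos : ∀ s ∈ Icc a b, 0 < g s)
    (hg' : ∀ s ∈ Icc a b, g' s ≤ -(α * g s ^ (1 + θ))) :
    MonotoneOn (fun s => g s ^ (-θ) - α * θ * s) (Icc a b) := by
  have hderiv : ∀ s ∈ Icc a b, HasDerivAt (fun s => g s ^ (-θ) - α * θ * s)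
      (-θ * g s ^ (-θ - 1) * g' s - α * θ) s := fun s hs =>
    (((hg s hs).rpow_const (Or.inl (hpos s hs).ne')).sub
      ((hasDerivAt_id s).const_mul (α * θ))).congr_deriv (by ring)
  refine monotoneOn_of_hasDerivWithinAt_nonneg (convex_Icc a b)
    (fun s hs => (hderiv s hs).continuousAt.continuousWithinAt)
    (fun s hs => (hderiv s (interior_subset hs)).hasDerivWithinAt) fun s hs => ?_
  have hs := interior_subset hs
  have hcancel : g s ^ (-θ - 1) * g s ^ (1 + θ) = 1 := by
    rw [← Real.rpow_add (hpos s hs), show -θ - 1 + (1 + θ) = 0 by ring, Real.rpow_zero]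
  have hscaled := mul_le_mul_of_nonneg_left (hg' s hs)
    (mul_nonneg hθ.le (Real.rpow_nonneg (hpos s hs).le (-θ - 1)))
  rw [show θ * g s ^ (-θ - 1) * -(α * g s ^ (1 + θ))
      = -(α * θ) * (g s ^ (-θ - 1) * g s ^ (1 + θ)) by ring, hcancel, mul_one] at hscaled
  linarith

theorem le_div_rpow_of_rpow_neg_add_le {x₀ x c : ℝ} (hθ : 0 < θ) (hx₀ : 0 < x₀) (hx : 0 < x)
    (hc : 0 ≤ c) (h : x₀ ^ (-θ) + c ≤ x ^ (-θ)) :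
    x ≤ x₀ / (1 + c * x₀ ^ θ) ^ (1 / θ) := by
  have hD : 0 < 1 + c * x₀ ^ θ := by positivity
  have hfactor : x₀ ^ (-θ) + c = x₀ ^ (-θ) * (1 + c * x₀ ^ θ) := by
    rw [mul_add, mul_one, mul_left_comm, ← Real.rpow_add hx₀, neg_add_cancel, Real.rpow_zero,
      mul_one]
  have hinv : -θ * -(1 / θ) = 1 := by field_simp
  calc x = (x ^ (-θ)) ^ (-(1 / θ)) := by rw [← Real.rpow_mul hx.le, hinv, Real.rpow_one]
    _ ≤ (x₀ ^ (-θ) * (1 + c * x₀ ^ θ)) ^ (-(1 / θ)) :=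
      Real.rpow_le_rpow_of_nonpos (by positivity) (hfactor ▸ h) (by simp [hθ.le])
    _ = x₀ / (1 + c * x₀ ^ θ) ^ (1 / θ) := by
      rw [Real.mul_rpow (by positivity) hD.le, ← Real.rpow_mul hx₀.le, hinv, Real.rpow_one,
        Real.rpow_neg hD.le, ← div_eq_mul_inv]

theorem le_div_rpow_of_hasDerivAt_le_neg_mul_rpow {t : ℝ} (hθ : 0 < θ) (hα : 0 ≤ α)
    (ht : 0 ≤ t) (hg : ∀ s ∈ Icc 0 t, HasDerivAt g (g' s) s)
    (hnonneg : ∀ s ∈ Icc 0 t, 0 ≤ g s) (hg' : ∀ s ∈ Icc 0 t, g' s ≤ -(α * g s ^ (1 + θ))) :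
    g t ≤ g 0 / (1 + α * θ * t * g 0 ^ θ) ^ (1 / θ) := by
  have hanti : AntitoneOn g (Icc 0 t) :=
    antitoneOn_of_hasDerivWithinAt_nonpos (convex_Icc 0 t)
      (fun s hs => (hg s hs).continuousAt.continuousWithinAt)
      (fun s hs => (hg s (interior_subset hs)).hasDerivWithinAt) fun s hs => by
        have hs := interior_subset hs
        nlinarith [hg' s hs, Real.rpow_nonneg (hnonneg s hs) (1 + θ)]
  have h0 : 0 ∈ Icc 0 t := left_mem_Icc.2 ht
  have htt : t ∈ Icc 0 t := right_mem_Icc.2 ht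
  rcases (hnonneg t htt).eq_or_lt with hzero | hgt
  · have := hnonneg 0 h0
    rw [← hzero]
    positivity
  have hpos : ∀ s ∈ Icc 0 t, 0 < g s := fun s hs => hgt.trans_le (hanti hs htt hs.2)
  have hmono := monotoneOn_rpow_neg_sub_mul hθ hg hpos hg' h0 htt ht
  simp only [mul_zero, sub_zero] at hmono
  exact le_div_rpow_of_rpow_neg_add_le hθ (hpos 0 h0) hgt (by positivity) (by linarith)

end ODEComparison

/-- The Kurdyka–Łojasiewicz inequality implies a polynomial rate of convergence for
gradient flow. -/
theorem kl_implies_gradient_flow_rate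
    {E : Type*} [NormedAddCommGroup E] [InnerProductSpace ℝ E] [FiniteDimensional ℝ E]
    (F : E → ℝ) (hF : Differentiable ℝ F) (hFnonneg : ∀ u, 0 ≤ F u)
    (θ : ℝ) (hθ : θ ∈ Set.Ioo (0 : ℝ) 1) (α : ℝ) (hα : 0 < α)
    (hKL : ∀ u : E, α * F u ^ (1 + θ) ≤ ‖gradient F u‖ ^ 2)
    (w : ℝ → E)
    (hw : ∀ t : ℝ, 0 ≤ t → HasDerivAt w (-gradient F (w t)) t) :
    ∀ t : ℝ, 0 ≤ t →
      F (w t) ≤ F (w 0) / (1 + α * θ * F (w 0) ^ θ * t) ^ (1 / θ) := by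
  intro t ht
  have hdecay : ∀ s ∈ Icc 0 t,
      HasDerivAt (fun s => F (w s)) (-‖gradient F (w s)‖ ^ 2) s := fun s hs => by
    simpa [inner_neg_right, real_inner_self_eq_norm_sq] using
      (hF (w s)).hasGradientAt.comp_hasDerivAt (hw s hs.1)
  rw [mul_right_comm]
  exact le_div_rpow_of_hasDerivAt_le_neg_mul_rpow hθ.1 hα.le ht hdecay
    (fun s _ => hFnonneg (w s)) fun s _ => neg_le_neg (hKL (w s))
end

section
/- Let E be a finite-dimensional real inner product space and w* ∈ E with ‖w*‖ = 1. Define the phase-retrieval population loss F : E → ℝ by F(u) = ‖u‖² − ⟨u, w*⟩² + (3/4)(‖u‖² − 1)². Let w : [0,∞) → E be a gradient-flow trajectory of F with ⟨w(0), w*⟩ ≠ 0. Then for every t ≥ 0, F(w(t)) ≤ F(w(0)) · min{1, exp(−t + 1/⟨w(0), w*⟩²)}. -/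
/-!
Along the flow the overlap `a = ⟪w, w*⟫` solves the linear equation `a' = -3(‖w‖² - 1) a`, so it
never vanishes, and `a²` never exceeds `max (a(0)², 1)`: where `a² > 1`, Cauchy–Schwarz gives
`‖w‖² > 1` and `a²` decreases. The pointwise inequality `F(u) (6‖u‖² - 5) ≤ ‖∇F(u)‖²` makes
`F(w t) eᵗ / a(t)²` nonincreasing, hence
`F(w t) ≤ F(w 0) e⁻ᵗ max (a(0)², 1) / a(0)² ≤ F(w 0) e^(-t + 1/a(0)²)`,
and `F(w t) ≤ F(w 0)` because `F` decreases along its own gradient flow.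
-/

open RealInnerProductSpace Real Set

theorem antitoneOn_Ici_of_hasDerivAt_nonpos {f f' : ℝ → ℝ} {a : ℝ}
    (hf : ∀ s, a ≤ s → HasDerivAt f (f' s) s) (hf' : ∀ s, a < s → f' s ≤ 0) :
    AntitoneOn f (Ici a) := by
  refine antitoneOn_of_hasDerivWithinAt_nonpos (f' := f') (convex_Ici a)
    (fun s hs => (hf s hs).continuousAt.continuousWithinAt) (fun s hs => ?_) (fun s hs => ?_)
  · rw [interior_Ici] at hs ⊢
    exact (hf s hs.le).hasDerivWithinAt
  · rw [interior_Ici] at hs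
    exact hf' s hs

theorem ne_zero_of_hasDerivAt_eq_mul_self {f g : ℝ → ℝ} {a t : ℝ} (hg : ContinuousOn g (Ici a))
    (hf : ∀ s, a ≤ s → HasDerivAt f (g s * f s) s) (ha : f a ≠ 0) (hat : a ≤ t) : f t ≠ 0 := by
  intro hft
  have hmaps : MapsTo (fun s => a + t - s) (Icc a t) (Icc a t) :=
    fun s hs => ⟨by linarith [hs.2], by linarith [hs.1]⟩
  obtain ⟨K, hK⟩ := isCompact_Icc.exists_bound_of_continuousOn (hg.mono Icc_subset_Ici_self)
  have hrev : ∀ s ∈ Icc a t, HasDerivAt (f ∘ fun s => a + t - s)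
      (g (a + t - s) * f (a + t - s) * -1) s :=
    fun s hs => (hf _ (hmaps hs).1).comp s ((hasDerivAt_id s).const_sub (a + t))
  -- Time reversal turns the zero at `t` into an initial zero, so Grönwall forces `f a = 0`.
  have hzero := eq_zero_of_abs_deriv_le_mul_abs_self_of_eq_zero_right (K := K)
    (fun s hs => (hrev s hs).continuousAt.continuousWithinAt)
    (fun s hs => (hrev s (Ico_subset_Icc_self hs)).hasDerivWithinAt)
    (by simpa using hft)
    (fun s hs => by
      rw [norm_mul, norm_mul, norm_neg, norm_one, mul_one]
      exact mul_le_mul_of_nonneg_right (hK _ (hmaps (Ico_subset_Icc_self hs))) (norm_nonneg _))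
    t ⟨hat, le_rfl⟩
  exact ha (by simpa using hzero)

theorem le_max_of_hasDerivAt_neg_of_lt {f f' : ℝ → ℝ} {a c t : ℝ}
    (hf : ∀ s, a ≤ s → HasDerivAt f (f' s) s) (hneg : ∀ s, a ≤ s → c < f s → f' s < 0)
    (hat : a ≤ t) : f t ≤ max (f a) c := by
  refine le_of_forall_pos_le_add fun ε hε => ?_
  refine image_le_of_deriv_right_lt_deriv_boundary (B := fun _ => max (f a) c + ε) (B' := 0)
    (fun s hs => (hf s hs.1).continuousAt.continuousWithinAt)
    (fun s hs => (hf s hs.1).hasDerivWithinAt) (by linarith [le_max_left (f a) c])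
    (fun _ => hasDerivAt_const _ _) (fun s hs hfs => hneg s hs.1 ?_) ⟨hat, le_rfl⟩
  linarith [le_max_right (f a) c]

theorem max_le_mul_exp_inv {x : ℝ} (hx : 0 < x) : max x 1 ≤ x * exp x⁻¹ := by
  refine max_le (le_mul_of_one_le_right hx.le (one_le_exp (inv_nonneg.2 hx.le))) ?_
  calc 1 = x * x⁻¹ := (mul_inv_cancel₀ hx.ne').symm
    _ ≤ x * exp x⁻¹ := by
      gcongr
      linarith [add_one_le_exp x⁻¹]

-- The difference of the two sides is `(3/4)(r-1)²(6r+5) + 3(r-h)(2r-1)`: affine in `h`,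
-- and nonnegative at both `h = 0` and `h = r`.
theorem phaseRetrieval_loss_mul_le_grad_sq {r h : ℝ} (h0 : 0 ≤ h) (hr : h ≤ r) :
    (r - h + 3 / 4 * (r - 1) ^ 2) * (6 * r - 5) ≤ (3 * r - 1) ^ 2 * r - 4 * h * (3 * r - 2) := by
  nlinarith [mul_nonneg (sub_nonneg.2 hr) (sq_nonneg (r - 1)), mul_nonneg h0 (sq_nonneg (r - 1)),
    mul_nonneg (sub_nonneg.2 hr) h0]

namespace PhaseRetrieval

variable {E : Type*} [NormedAddCommGroup E] [InnerProductSpace ℝ E]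

noncomputable def loss (wstar u : E) : ℝ := ‖u‖ ^ 2 - ⟪u, wstar⟫ ^ 2 + (3 / 4) * (‖u‖ ^ 2 - 1) ^ 2

noncomputable def lossGrad (wstar u : E) : E := (3 * ‖u‖ ^ 2 - 1) • u - (2 * ⟪u, wstar⟫) • wstar

theorem hasGradientAt_loss [CompleteSpace E] (wstar u : E) :
    HasGradientAt (loss wstar) (lossGrad wstar u) u := by
  have hnorm := (hasFDerivAt_id u).norm_sq
  have hinner : HasFDerivAt (fun v : E => ⟪v, wstar⟫) (innerSL ℝ wstar) u := by
    convert (innerSL ℝ wstar).hasFDerivAt using 1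
    ext v
    exact real_inner_comm _ _
  rw [hasGradientAt_iff_hasFDerivAt]
  refine ((hnorm.sub (hinner.pow 2)).add
    ((hnorm.sub_const 1).pow 2 |>.const_mul (3 / 4))).congr_fderiv ?_
  ext v
  simp only [id_eq, ContinuousLinearMap.comp_id, Nat.add_one_sub_one, pow_one, nsmul_eq_mul,
    Nat.cast_ofNat, add_apply, sub_apply, smul_apply, coe_innerSL_apply, real_inner_comm v,
    smul_eq_mul, lossGrad, map_sub, map_smul, InnerProductSpace.toDual_apply_apply]
  ring

variable {wstar : E} (hws : ‖wstar‖ = 1)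
include hws

theorem inner_sq_le_norm_sq (u : E) : ⟪u, wstar⟫ ^ 2 ≤ ‖u‖ ^ 2 := by
  simpa [hws] using pow_le_pow_left₀ (abs_nonneg _) (abs_real_inner_le_norm u wstar) 2

theorem loss_nonneg (u : E) : 0 ≤ loss wstar u := by
  unfold loss
  nlinarith [inner_sq_le_norm_sq hws u, sq_nonneg (‖u‖ ^ 2 - 1)]

theorem inner_lossGrad (u : E) :
    ⟪lossGrad wstar u, wstar⟫ = 3 * (‖u‖ ^ 2 - 1) * ⟪u, wstar⟫ := by
  simp only [lossGrad, inner_sub_left, real_inner_smul_left, real_inner_self_eq_norm_sq, hws]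
  ring

theorem norm_lossGrad_sq (u : E) : ‖lossGrad wstar u‖ ^ 2 =
    (3 * ‖u‖ ^ 2 - 1) ^ 2 * ‖u‖ ^ 2 - 4 * ⟪u, wstar⟫ ^ 2 * (3 * ‖u‖ ^ 2 - 2) := by
  rw [← real_inner_self_eq_norm_sq]
  simp only [lossGrad, inner_sub_left, inner_sub_right, real_inner_smul_left, real_inner_smul_right,
    real_inner_self_eq_norm_sq u, real_inner_self_eq_norm_sq wstar, real_inner_comm u wstar, hws]
  ring

theorem loss_mul_le_norm_lossGrad_sq (u : E) :
    loss wstar u * (6 * ‖u‖ ^ 2 - 5) ≤ ‖lossGrad wstar u‖ ^ 2 := by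
  rw [norm_lossGrad_sq hws]
  exact phaseRetrieval_loss_mul_le_grad_sq (sq_nonneg _) (inner_sq_le_norm_sq hws u)

omit hws

section Flow

variable {w : ℝ → E} (hw : ∀ t, 0 ≤ t → HasDerivAt w (-lossGrad wstar (w t)) t)
include hw

theorem hasDerivAt_loss_comp [CompleteSpace E] {t : ℝ} (ht : 0 ≤ t) :
    HasDerivAt (fun s => loss wstar (w s)) (-‖lossGrad wstar (w t)‖ ^ 2) t := by
  refine ((hasGradientAt_loss wstar (w t)).hasFDerivAt.comp_hasDerivAt t (hw t ht)).congr_deriv ?_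
  rw [InnerProductSpace.toDual_apply_apply, inner_neg_right, real_inner_self_eq_norm_sq]

theorem antitoneOn_loss_comp [CompleteSpace E] : AntitoneOn (fun s => loss wstar (w s)) (Ici 0) :=
  antitoneOn_Ici_of_hasDerivAt_nonpos (fun _ ht => hasDerivAt_loss_comp hw ht)
    fun _ _ => neg_nonpos.2 (sq_nonneg _)

include hws

theorem hasDerivAt_inner_comp {t : ℝ} (ht : 0 ≤ t) :
    HasDerivAt (fun s => ⟪w s, wstar⟫) (-3 * (‖w t‖ ^ 2 - 1) * ⟪w t, wstar⟫) t := by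
  refine ((hw t ht).inner ℝ (hasDerivAt_const t wstar)).congr_deriv ?_
  rw [inner_zero_right, zero_add, inner_neg_left, inner_lossGrad hws]
  ring

theorem hasDerivAt_inner_sq_comp {t : ℝ} (ht : 0 ≤ t) :
    HasDerivAt (fun s => ⟪w s, wstar⟫ ^ 2) (-6 * (‖w t‖ ^ 2 - 1) * ⟪w t, wstar⟫ ^ 2) t := by
  refine ((hasDerivAt_inner_comp hws hw ht).pow 2).congr_deriv ?_
  push_cast
  ring

theorem inner_comp_ne_zero (h0 : ⟪w 0, wstar⟫ ≠ 0) {t : ℝ} (ht : 0 ≤ t) : ⟪w t, wstar⟫ ≠ 0 := by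
  have hcont : ContinuousOn (fun s => -3 * (‖w s‖ ^ 2 - 1)) (Ici 0) :=
    continuousOn_const.mul
      (((continuousOn_of_forall_continuousAt fun s hs => (hw s hs).continuousAt).norm.pow 2).sub
        continuousOn_const)
  exact ne_zero_of_hasDerivAt_eq_mul_self hcont (fun s hs => hasDerivAt_inner_comp hws hw hs) h0 ht

theorem inner_sq_comp_le_max {t : ℝ} (ht : 0 ≤ t) :
    ⟪w t, wstar⟫ ^ 2 ≤ max (⟪w 0, wstar⟫ ^ 2) 1 :=
  le_max_of_hasDerivAt_neg_of_lt (fun _ hs => hasDerivAt_inner_sq_comp hws hw hs)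
    (fun s _ hs => by nlinarith [inner_sq_le_norm_sq hws (w s)]) ht

variable [CompleteSpace E]

-- `log` of the Lyapunov function has derivative `-‖∇F‖²/F + 1 + 6(‖w‖² - 1)`, which is
-- nonpositive by `loss_mul_le_norm_lossGrad_sq`.
theorem antitoneOn_loss_mul_exp_div_inner_sq (h0 : ⟪w 0, wstar⟫ ≠ 0) :
    AntitoneOn (fun s => loss wstar (w s) * exp s / ⟪w s, wstar⟫ ^ 2) (Ici 0) := by
  refine antitoneOn_Ici_of_hasDerivAt_nonpos (fun s hs =>
    ((hasDerivAt_loss_comp hw hs).mul (hasDerivAt_exp s)).div (hasDerivAt_inner_sq_comp hws hw hs)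
      (pow_ne_zero 2 (inner_comp_ne_zero hws hw h0 hs))) fun s hs => ?_
  have hkey := loss_mul_le_norm_lossGrad_sq hws (w s)
  have hnum : (-‖lossGrad wstar (w s)‖ ^ 2 * exp s + loss wstar (w s) * exp s) * ⟪w s, wstar⟫ ^ 2
      - loss wstar (w s) * exp s * (-6 * (‖w s‖ ^ 2 - 1) * ⟪w s, wstar⟫ ^ 2)
      = exp s * ⟪w s, wstar⟫ ^ 2 *
          (loss wstar (w s) * (6 * ‖w s‖ ^ 2 - 5) - ‖lossGrad wstar (w s)‖ ^ 2) := by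
    ring
  simp only [Pi.mul_apply]
  rw [hnum]
  exact div_nonpos_of_nonpos_of_nonneg
    (mul_nonpos_of_nonneg_of_nonpos (by positivity) (by linarith)) (by positivity)

theorem loss_comp_le_mul_exp (h0 : ⟪w 0, wstar⟫ ≠ 0) {t : ℝ} (ht : 0 ≤ t) :
    loss wstar (w t) ≤ loss wstar (w 0) * exp (-t + 1 / ⟪w 0, wstar⟫ ^ 2) := by
  have hη0 : 0 < ⟪w 0, wstar⟫ ^ 2 := by positivity
  have hwt := inner_comp_ne_zero hws hw h0 ht
  have hZ := antitoneOn_loss_mul_exp_div_inner_sq hws hw h0 self_mem_Ici ht ht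
  simp only [exp_zero, mul_one] at hZ
  calc loss wstar (w t)
      = loss wstar (w t) * exp t / ⟪w t, wstar⟫ ^ 2 * ⟪w t, wstar⟫ ^ 2 * exp (-t) := by
        rw [exp_neg]
        field_simp
    _ ≤ loss wstar (w 0) / ⟪w 0, wstar⟫ ^ 2 * max (⟪w 0, wstar⟫ ^ 2) 1 * exp (-t) := by
        gcongr
        · exact div_nonneg (loss_nonneg hws _) hη0.le
        · exact inner_sq_comp_le_max hws hw ht
    _ ≤ loss wstar (w 0) / ⟪w 0, wstar⟫ ^ 2 * (⟪w 0, wstar⟫ ^ 2 * exp (⟪w 0, wstar⟫ ^ 2)⁻¹)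
          * exp (-t) := by
        gcongr
        · exact div_nonneg (loss_nonneg hws _) hη0.le
        · exact max_le_mul_exp_inv hη0
    _ = loss wstar (w 0) * exp (-t + 1 / ⟪w 0, wstar⟫ ^ 2) := by
        rw [exp_add, one_div]
        field_simp

end Flow

end PhaseRetrieval

/-- Rate of convergence of gradient flow on the phase-retrieval population loss. -/
theorem phase_retrieval_gradient_flow_rate
    {E : Type*} [NormedAddCommGroup E] [InnerProductSpace ℝ E] [FiniteDimensional ℝ E]
    (wstar : E) (hws : ‖wstar‖ = 1)
    (F : E → ℝ)
    (hFdef : ∀ u : E, F u = ‖u‖ ^ 2 - ⟪u, wstar⟫ ^ 2 + (3 / 4) * (‖u‖ ^ 2 - 1) ^ 2)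
    (w : ℝ → E)
    (hw : ∀ t : ℝ, 0 ≤ t → HasDerivAt w (-gradient F (w t)) t)
    (h0 : ⟪w 0, wstar⟫ ≠ 0) :
    ∀ t : ℝ, 0 ≤ t →
      F (w t) ≤ F (w 0) * min 1 (Real.exp (-t + 1 / ⟪w 0, wstar⟫ ^ 2)) := by
  obtain rfl : F = PhaseRetrieval.loss wstar := funext hFdef
  have hflow : ∀ t, 0 ≤ t → HasDerivAt w (-PhaseRetrieval.lossGrad wstar (w t)) t := fun t ht => by
    simpa only [(PhaseRetrieval.hasGradientAt_loss wstar (w t)).gradient] using hw t ht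
  intro t ht
  rw [mul_min_of_nonneg _ _ (PhaseRetrieval.loss_nonneg hws _), mul_one]
  exact le_min (PhaseRetrieval.antitoneOn_loss_comp hflow self_mem_Ici ht ht)
    (PhaseRetrieval.loss_comp_le_mul_exp hws hflow h0 ht)
end
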